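/- For every continuously differentiable function u : [0,1] → ℝ with u(1) = 0, one has ∫₀¹ u(r)² dr ≤ 8 ∫₀¹ r · u'(r)² dr. -/

import Mathlib

open MeasureTheory

/-- Weighted Poincaré inequality (2.2), degenerate case `α = 1`:
for every `C¹` function `u : [0,1] → ℝ` with `u 1 = 0`,
`∫₀¹ u(r)² dr ≤ 8 ∫₀¹ r · u'(r)² dr`. -/
theorem stmt_1 (u : ℝ → ℝ) (hu : ContDiff ℝ 1 u) (hu1 : u 1 = 0) :
    ∫ r in Set.Ioo (0 : ℝ) 1, (u r) ^ 2
      ≤ 8 * ∫ r in Set.Ioo (0 : ℝ) 1, r * (deriv u r) ^ 2 := by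
  set A := ∫ r in Set.Ioo (0 : ℝ) 1, r * (deriv u r) ^ 2 with hAdef
  have hu' : Continuous (deriv u) := hu.continuous_deriv le_rfl
  have hcu : Continuous u := hu.continuous
  have hcw : Continuous fun t : ℝ => t * (deriv u t) ^ 2 := by continuity
  have hInt_w : IntegrableOn (fun t : ℝ => t * (deriv u t) ^ 2) (Set.Ioo (0:ℝ) 1) :=
    (hcw.integrableOn_Icc (a := 0) (b := 1)).mono_set Set.Ioo_subset_Icc_self
  have hA0 : 0 ≤ A := by
    apply setIntegral_nonneg measurableSet_Ioo
    intro t ht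
    have := sq_nonneg (deriv u t)
    nlinarith [ht.1.le]
  -- pointwise bound
  have key : ∀ c : ℝ, 0 < c → ∀ r ∈ Set.Ioo (0:ℝ) 1,
      (u r) ^ 2 ≤ A ^ 2 / (2 * c ^ 2) + 8 * c ^ 2 * r ^ (-(1/2) : ℝ) := by
    intro c hc r hr
    obtain ⟨hr0, hr1⟩ := hr
    -- FTC
    have hftc : ∫ t in r..(1:ℝ), deriv u t = u 1 - u r := by
      apply intervalIntegral.integral_deriv_eq_sub
      · intro x _; exact (hu.differentiable one_ne_zero).differentiableAt
      · exact hu'.intervalIntegrable r 1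
    have habs : |u r| ≤ ∫ t in r..(1:ℝ), |deriv u t| := by
      have h1 : |u r| = |∫ t in r..(1:ℝ), deriv u t| := by
        rw [hftc, hu1, zero_sub, abs_neg]
      rw [h1]
      exact intervalIntegral.abs_integral_le_integral_abs hr1.le
    -- pointwise AM-GM inside the integral
    set g : ℝ → ℝ := fun t => t * (deriv u t) ^ 2 / (2 * c) + c / 2 * t ^ (-(5/4) : ℝ) with hg
    have hptw : ∀ t ∈ Set.Icc r 1, |deriv u t| ≤ g t := by
      intro t ht
      have ht0 : 0 < t := lt_of_lt_of_le hr0 ht.1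
      have ht1 : t ≤ 1 := ht.2
      set v := deriv u t with hv
      set P := t ^ ((5:ℝ)/4) with hP
      have hPpos : 0 < P := Real.rpow_pos_of_pos ht0 _
      have hPt : P ≤ t := by
        have : t ^ ((5:ℝ)/4) ≤ t ^ (1:ℝ) :=
          Real.rpow_le_rpow_of_exponent_ge ht0 ht1 (by norm_num)
        simpa [hP] using this
      have hQ : t ^ (-(5/4) : ℝ) = 1 / P := by
        simp [hP, Real.rpow_neg ht0.le]
      have h2 : 2 * c * P * |v| ≤ P ^ 2 * v ^ 2 + c ^ 2 := by
        nlinarith [sq_nonneg (P * |v| - c), sq_abs v]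
      have h3 : |v| ≤ P * v ^ 2 / (2 * c) + c / (2 * P) := by
        rw [div_add_div _ _ (by positivity) (by positivity), le_div_iff₀ (by positivity)]
        nlinarith [sq_abs v]
      have h4 : P * v ^ 2 / (2 * c) ≤ t * v ^ 2 / (2 * c) := by
        have h := mul_le_mul_of_nonneg_right hPt (sq_nonneg v)
        apply div_le_div_of_nonneg_right h (by positivity)
      have h5 : c / 2 * (1 / P) = c / (2 * P) := by ring
      rw [hg]
      simp only [hQ]
      rw [h5]
      exact h3.trans (by linarith)
    -- integrability on [r,1]
    have hint1 : IntervalIntegrable (fun t => |deriv u t|) volume r 1 :=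
      (hu'.abs).intervalIntegrable r 1
    have hcont54 : ContinuousOn (fun t : ℝ => t ^ (-(5/4) : ℝ)) (Set.uIcc r 1) := by
      intro t ht
      rw [Set.uIcc_of_le hr1.le] at ht
      exact (Real.continuousAt_rpow_const t _ (Or.inl (ne_of_gt (lt_of_lt_of_le hr0 ht.1)))).continuousWithinAt
    have hint2 : IntervalIntegrable g volume r 1 := by
      apply IntervalIntegrable.add
      · exact ((hcw.div_const (2*c)).intervalIntegrable r 1)
      · exact (hcont54.intervalIntegrable.const_mul _)
    have hmono : ∫ t in r..(1:ℝ), |deriv u t| ≤ ∫ t in r..(1:ℝ), g t :=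
      intervalIntegral.integral_mono_on hr1.le hint1 hint2 hptw
    -- compute/estimate ∫ g
    have hsplit : ∫ t in r..(1:ℝ), g t
        = (∫ t in r..(1:ℝ), t * (deriv u t) ^ 2) / (2 * c)
          + c / 2 * ∫ t in r..(1:ℝ), t ^ (-(5/4) : ℝ) := by
      rw [hg]
      rw [intervalIntegral.integral_add ((hcw.div_const (2*c)).intervalIntegrable r 1)
        (hcont54.intervalIntegrable.const_mul _),
        intervalIntegral.integral_div, intervalIntegral.integral_const_mul]
    have hbound1 : ∫ t in r..(1:ℝ), t * (deriv u t) ^ 2 ≤ A := by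
      rw [intervalIntegral.integral_of_le hr1.le, integral_Ioc_eq_integral_Ioo]
      apply setIntegral_mono_set hInt_w
      · filter_upwards [self_mem_ae_restrict measurableSet_Ioo] with t ht
        simp only [Pi.zero_apply]
        nlinarith [ht.1.le, sq_nonneg (deriv u t)]
      · exact Filter.Eventually.of_forall (fun t ht => ⟨lt_of_lt_of_le hr0 ht.1.le, ht.2⟩)
    have hbound2 : ∫ t in r..(1:ℝ), t ^ (-(5/4) : ℝ) ≤ 4 * r ^ (-(1/4) : ℝ) := by
      rw [integral_rpow (Or.inr ⟨by norm_num, by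
        rw [Set.uIcc_of_le hr1.le]; exact fun h => absurd h.1 (not_le.mpr hr0)⟩)]
      have h2 : (-(5/4) + 1 : ℝ) = -(1/4) := by norm_num
      rw [h2, Real.one_rpow]
      have hrp : 0 < r ^ (-(1/4) : ℝ) := Real.rpow_pos_of_pos hr0 _
      have heq : (1 - r ^ (-(1/4) : ℝ)) / (-(1/4) : ℝ) = 4 * r ^ (-(1/4) : ℝ) - 4 := by
        ring
      rw [heq]
      linarith
    have habs2 : |u r| ≤ A / (2 * c) + 2 * c * r ^ (-(1/4) : ℝ) := by
      have hc2 : 0 < 2 * c := by positivity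
      calc |u r| ≤ ∫ t in r..(1:ℝ), g t := habs.trans hmono
        _ = (∫ t in r..(1:ℝ), t * (deriv u t) ^ 2) / (2 * c)
            + c / 2 * ∫ t in r..(1:ℝ), t ^ (-(5/4) : ℝ) := hsplit
        _ ≤ A / (2 * c) + c / 2 * (4 * r ^ (-(1/4) : ℝ)) := by
            gcongr
        _ = A / (2 * c) + 2 * c * r ^ (-(1/4) : ℝ) := by ring
    -- square it
    have hsq : (r ^ (-(1/4) : ℝ)) ^ 2 = r ^ (-(1/2) : ℝ) := by
      rw [← Real.rpow_natCast (r ^ (-(1/4) : ℝ)) 2, ← Real.rpow_mul hr0.le]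
      norm_num
    have hB0 : 0 ≤ A / (2 * c) + 2 * c * r ^ (-(1/4) : ℝ) := by
      have := Real.rpow_pos_of_pos hr0 (-(1/4) : ℝ)
      positivity
    have : (u r) ^ 2 ≤ (A / (2 * c) + 2 * c * r ^ (-(1/4) : ℝ)) ^ 2 := by
      rw [← sq_abs (u r)]
      exact pow_le_pow_left₀ (abs_nonneg _) habs2 2
    calc (u r) ^ 2 ≤ (A / (2 * c) + 2 * c * r ^ (-(1/4) : ℝ)) ^ 2 := this
      _ ≤ 2 * (A / (2 * c)) ^ 2 + 2 * (2 * c * r ^ (-(1/4) : ℝ)) ^ 2 := by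
          nlinarith [sq_nonneg (A / (2 * c) - 2 * c * r ^ (-(1/4) : ℝ))]
      _ = A ^ 2 / (2 * c ^ 2) + 8 * c ^ 2 * (r ^ (-(1/4) : ℝ)) ^ 2 := by
          field_simp; ring
      _ = A ^ 2 / (2 * c ^ 2) + 8 * c ^ 2 * r ^ (-(1/2) : ℝ) := by rw [hsq]
  -- integrate the pointwise bound
  have hInt_u2 : IntegrableOn (fun r : ℝ => (u r) ^ 2) (Set.Ioo (0:ℝ) 1) :=
    ((hcu.pow 2).integrableOn_Icc (a := 0) (b := 1)).mono_set Set.Ioo_subset_Icc_self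
  have hInt_rpow : IntegrableOn (fun r : ℝ => r ^ (-(1/2) : ℝ)) (Set.Ioo (0:ℝ) 1) := by
    have := (intervalIntegral.intervalIntegrable_rpow' (a := 0) (b := 1) (r := (-(1/2) : ℝ)) (by norm_num))
    exact ((intervalIntegrable_iff_integrableOn_Ioc_of_le (by norm_num)).1 this).mono_set
      Set.Ioo_subset_Ioc_self
  have hval_rpow : ∫ r in Set.Ioo (0:ℝ) 1, r ^ (-(1/2) : ℝ) = 2 := by
    rw [← integral_Ioc_eq_integral_Ioo, ← intervalIntegral.integral_of_le (by norm_num : (0:ℝ) ≤ 1)]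
    rw [integral_rpow (Or.inl (by norm_num))]
    rw [Real.one_rpow, Real.zero_rpow (by norm_num)]
    norm_num
  have main : ∀ c : ℝ, 0 < c → ∫ r in Set.Ioo (0:ℝ) 1, (u r) ^ 2 ≤ A ^ 2 / (2 * c ^ 2) + 16 * c ^ 2 := by
    intro c hc
    have hIntRHS : IntegrableOn (fun r : ℝ => A ^ 2 / (2 * c ^ 2) + 8 * c ^ 2 * r ^ (-(1/2) : ℝ))
        (Set.Ioo (0:ℝ) 1) := by
      exact (integrableOn_const (by simp [Real.volume_Ioo])).add (hInt_rpow.const_mul _)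
    have h1 := setIntegral_mono_on hInt_u2 hIntRHS measurableSet_Ioo (key c hc)
    have h2 : ∫ r in Set.Ioo (0:ℝ) 1, (A ^ 2 / (2 * c ^ 2) + 8 * c ^ 2 * r ^ (-(1/2) : ℝ))
        = A ^ 2 / (2 * c ^ 2) + 16 * c ^ 2 := by
      rw [integral_add (show Integrable (fun _ : ℝ => A ^ 2 / (2 * c ^ 2)) (volume.restrict (Set.Ioo (0:ℝ) 1)) from integrableOn_const (by simp [Real.volume_Ioo])) (hInt_rpow.const_mul _),
        setIntegral_const, integral_const_mul, hval_rpow]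
      simp [Real.volume_Ioo]
      ring
    linarith [h1, h2.le, h2.ge]
  -- optimize over c
  have final : ∀ ε : ℝ, 0 < ε → ∫ r in Set.Ioo (0:ℝ) 1, (u r) ^ 2 ≤ 6 * A + ε := by
    intro ε hε
    set M := max A (ε/4) with hM
    have hMpos : 0 < M := lt_of_lt_of_le (by positivity) (le_max_right _ _)
    have hAM : A ≤ M := le_max_left _ _
    have hMle : M ≤ A + ε/4 := max_le (by linarith) (by linarith)
    set c := Real.sqrt M / 2 with hc
    have hcpos : 0 < c := by positivity
    have hc2 : c ^ 2 = M / 4 := by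
      rw [hc, div_pow, Real.sq_sqrt hMpos.le]
      norm_num
    have := main c hcpos
    rw [hc2] at this
    have e1 : A ^ 2 / (2 * (M/4)) = 2 * A ^ 2 / M := by ring
    have e2 : 2 * A ^ 2 / M ≤ 2 * A := by
      rw [div_le_iff₀ hMpos]
      nlinarith
    have e3 : 16 * (M/4) = 4 * M := by ring
    calc ∫ r in Set.Ioo (0:ℝ) 1, (u r) ^ 2 ≤ A ^ 2 / (2 * (M/4)) + 16 * (M/4) := this
      _ = 2 * A ^ 2 / M + 4 * M := by rw [e1, e3]
      _ ≤ 2 * A + 4 * (A + ε/4) := by linarith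
      _ = 6 * A + ε := by ring
  have h6 : ∫ r in Set.Ioo (0:ℝ) 1, (u r) ^ 2 ≤ 6 * A := le_of_forall_pos_le_add final
  linarith
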